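/- arXiv:1801.06882 — 6 statements merged into one kernel-verified Lean document; each statement's English description precedes it below -/
import Mathlib

section
/- A matroid M is k-closure-laminar if and only if, whenever C1 and C2 are circuits of M with r(cl(C1) ∩ cl(C2)) ≥ k, either C1 ⊆ cl(C2) or C2 ⊆ cl(C1). -/
open Set

namespace Matroid

variable {α : Type*}

/-- A circuit is a minimal dependent set. -/
def Circuit (M : Matroid α) (C : Set α) : Prop := Minimal M.Dep C

/-- The rank of a set: the supremum of sizes of independent subsets. -/
noncomputable def rk (M : Matroid α) (X : Set α) : ℕ :=
  sSup {n | ∃ I, I ⊆ X ∧ M.Indep I ∧ I.ncard = n}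

/-- A Hamiltonian flat is a flat with a spanning circuit. -/
def HamFlat (M : Matroid α) (F : Set α) : Prop :=
  M.IsFlat F ∧ ∃ C, M.Circuit C ∧ C ⊆ F ∧ M.closure C = F

/-- `M` is `k`-closure-laminar if the Hamiltonian flats containing any given
`k`-element independent set form a chain under inclusion. -/
def KClosureLaminar (M : Matroid α) (k : ℕ) : Prop :=
  ∀ X ⊆ M.E, M.Indep X → X.ncard = k →
    IsChain (· ⊆ ·) {F | M.HamFlat F ∧ X ⊆ F}

/-- `M` is `k`-laminar if whenever two circuits meet in at least `k` elements,
one is contained in the closure of the other. -/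
def KLaminar (M : Matroid α) (k : ℕ) : Prop :=
  ∀ C₁ C₂, M.Circuit C₁ → M.Circuit C₂ → k ≤ (C₁ ∩ C₂).ncard →
    C₁ ⊆ M.closure C₂ ∨ C₂ ⊆ M.closure C₁

/-- Deletion of a set of elements. -/
def delete' (M : Matroid α) (D : Set α) : Matroid α := M.restrict (M.E \ D)

/-- Contraction of a set of elements, defined via duality. -/
def contract' (M : Matroid α) (C : Set α) : Matroid α := (M✶.delete' C)✶

end Matroid

lemma Matroid.flat_closure' {α : Type*} (M : Matroid α) (X : Set α) :
    M.IsFlat (M.closure X) := by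
  rw [Matroid.closure_def, sInter_eq_iInter]
  have hne : Nonempty ↑{F | M.IsFlat F ∧ X ∩ M.E ⊆ F} :=
    ⟨⟨M.E, M.ground_isFlat, inter_subset_right⟩⟩
  exact Matroid.IsFlat.iInter fun F ↦ F.2.1

lemma Matroid.rk_bddAbove {α : Type*} (M : Matroid α) [M.Finite] (X : Set α) :
    BddAbove {n | ∃ I, I ⊆ X ∧ M.Indep I ∧ I.ncard = n} := by
  refine ⟨M.E.ncard, fun n ⟨I, _, hI, hIcard⟩ ↦ ?_⟩
  exact hIcard ▸ Set.ncard_le_ncard hI.subset_ground M.ground_finite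

lemma Matroid.exists_of_le_rk {α : Type*} (M : Matroid α) [M.Finite] {X : Set α} {k : ℕ}
    (h : k ≤ M.rk X) : ∃ I, I ⊆ X ∧ M.Indep I ∧ I.ncard = k := by
  have hne : {n | ∃ I, I ⊆ X ∧ M.Indep I ∧ I.ncard = n}.Nonempty :=
    ⟨0, ∅, empty_subset _, M.empty_indep, Set.ncard_empty _⟩
  have hmem := Nat.sSup_mem hne (M.rk_bddAbove X)
  obtain ⟨I, hIX, hI, hIcard⟩ := hmem
  obtain ⟨J, hJI, hJcard⟩ := Set.exists_subset_card_eq (hIcard.symm ▸ h : k ≤ I.ncard)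
  exact ⟨J, hJI.trans hIX, hI.subset hJI, hJcard⟩

lemma Matroid.le_rk_of_indep {α : Type*} (M : Matroid α) [M.Finite] {X I : Set α} {k : ℕ}
    (hIX : I ⊆ X) (hI : M.Indep I) (hk : I.ncard = k) : k ≤ M.rk X :=
  le_csSup (M.rk_bddAbove X) ⟨I, hIX, hI, hk⟩

/-- A matroid `M` is `k`-closure-laminar iff whenever `C₁, C₂` are circuits
with `r(cl C₁ ∩ cl C₂) ≥ k`, one of them is contained in the closure of the other. -/
theorem kClosureLaminar_iff_circuits {α : Type*} (M : Matroid α) [M.Finite] (k : ℕ) :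
    M.KClosureLaminar k ↔
      ∀ C₁ C₂, M.Circuit C₁ → M.Circuit C₂ →
        k ≤ M.rk (M.closure C₁ ∩ M.closure C₂) →
        C₁ ⊆ M.closure C₂ ∨ C₂ ⊆ M.closure C₁ := by
  constructor
  · intro h C₁ C₂ hC₁ hC₂ hr
    obtain ⟨I, hIsub, hI, hIcard⟩ := M.exists_of_le_rk hr
    have hE₁ : C₁ ⊆ M.E := hC₁.prop.subset_ground
    have hE₂ : C₂ ⊆ M.E := hC₂.prop.subset_ground
    have hchain := h I hI.subset_ground hI hIcard
    have hF₁ : M.closure C₁ ∈ {F | M.HamFlat F ∧ I ⊆ F} :=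
      ⟨⟨M.flat_closure' C₁, C₁, hC₁, M.subset_closure C₁ hE₁, rfl⟩,
        hIsub.trans inter_subset_left⟩
    have hF₂ : M.closure C₂ ∈ {F | M.HamFlat F ∧ I ⊆ F} :=
      ⟨⟨M.flat_closure' C₂, C₂, hC₂, M.subset_closure C₂ hE₂, rfl⟩,
        hIsub.trans inter_subset_right⟩
    by_cases heq : M.closure C₁ = M.closure C₂
    · exact Or.inl (heq ▸ M.subset_closure C₁ hE₁)
    · rcases hchain hF₁ hF₂ heq with h' | h'
      · exact Or.inl ((M.subset_closure C₁ hE₁).trans h')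
      · exact Or.inr ((M.subset_closure C₂ hE₂).trans h')
  · intro h X hXE hX hcard F₁ hF₁ F₂ hF₂ hne
    obtain ⟨⟨hfl₁, C₁, hC₁, hC₁F, rfl⟩, hXF₁⟩ := hF₁
    obtain ⟨⟨hfl₂, C₂, hC₂, hC₂F, rfl⟩, hXF₂⟩ := hF₂
    have hrk : k ≤ M.rk (M.closure C₁ ∩ M.closure C₂) :=
      M.le_rk_of_indep (subset_inter hXF₁ hXF₂) hX hcard
    rcases h C₁ C₂ hC₁ hC₂ hrk with h' | h'
    · exact Or.inl (Matroid.closure_subset_closure_of_subset_closure h')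
    · exact Or.inr (Matroid.closure_subset_closure_of_subset_closure h')
end

section
/- If a matroid M is k-closure-laminar, then M is (k+1)-closure-laminar. -/
open Set

/-- a `k`-closure-laminar matroid is `(k+1)`-closure-laminar. -/
theorem kClosureLaminar_succ {α : Type*} (M : Matroid α) [M.Finite] (k : ℕ)
    (h : M.KClosureLaminar k) : M.KClosureLaminar (k + 1) := by
  intro X hXE hXi hXc
  obtain ⟨Y, hYX, hYc⟩ := Set.exists_subset_card_eq (le_of_lt (by omega : k < X.ncard))
  have := h Y (hYX.trans hXE) (hXi.subset hYX) hYc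
  refine this.mono fun F hF => ?_
  exact ⟨hF.1, hYX.trans hF.2⟩
end

section
/- For every non-negative integer k, the class of k-laminar matroids is closed under deletion and contraction (i.e., minor-closed). -/
open Set

namespace Matroid

variable {α : Type*} {M : Matroid α} {X I J C D S A B : Set α} {e : α}

lemma delete_eq' (M : Matroid α) (X : Set α) : M.delete' X = M ↾ (M.E \ X) := rfl

lemma delete_ground' (M : Matroid α) (X : Set α) : (M.delete' X).E = M.E \ X := rfl

lemma contract_eq' (M : Matroid α) (X : Set α) : M.contract' X = (M✶ ↾ (M.E \ X))✶ := rfl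

lemma contract_ground' (M : Matroid α) (X : Set α) : (M.contract' X).E = M.E \ X := rfl

lemma delete_dep_iff' : (M.delete' X).Dep S ↔ M.Dep S ∧ S ⊆ M.E \ X := by
  rw [delete_eq', restrict_dep_iff, dep_iff]
  constructor
  · rintro ⟨h1, h2⟩; exact ⟨⟨h1, h2.trans diff_subset⟩, h2⟩
  · rintro ⟨⟨h1, _⟩, h2⟩; exact ⟨h1, h2⟩

lemma delete_circuit' (h : (M.delete' X).Circuit C) : M.Circuit C ∧ C ⊆ M.E \ X := by
  obtain ⟨hd, hmin⟩ := h
  rw [delete_dep_iff'] at hd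
  exact ⟨⟨hd.1, fun T hT hTC => hmin (delete_dep_iff'.2 ⟨hT, hTC.trans hd.2⟩) hTC⟩, hd.2⟩

lemma subset_delete_closure' (hC : C ⊆ M.E \ X) (hA : A ⊆ M.E \ X)
    (hAcl : A ⊆ M.closure C) : A ⊆ (M.delete' X).closure C := by
  have hCE : C ⊆ M.E := hC.trans diff_subset
  obtain ⟨I, hI⟩ := (M.delete' X).exists_isBasis C (by rw [delete_ground']; exact hC)
  have hIM : M.IsBasis I C := by
    have h' := hI
    rw [delete_eq', isBasis_restrict_iff'] at h'
    rw [inter_eq_self_of_subset_left hCE] at h'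
    exact h'.1
  intro e he
  have heM : e ∈ M.closure I := by rw [hIM.closure_eq_closure]; exact hAcl he
  by_cases heI : e ∈ I
  · exact (M.delete' X).closure_subset_closure hI.subset
      ((M.delete' X).subset_closure I hI.indep.subset_ground heI)
  · have hdep : M.Dep (insert e I) := (hIM.indep.mem_closure_iff_of_notMem heI).1 heM
    have hdep' : (M.delete' X).Dep (insert e I) :=
      delete_dep_iff'.2 ⟨hdep, insert_subset (hA he) (hI.subset.trans hC)⟩
    have := (hI.indep.mem_closure_iff_of_notMem heI).2 hdep'
    exact (M.delete' X).closure_subset_closure hI.subset this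

lemma contract_indep_iff' [M.Finite] (hX : X ⊆ M.E) (hJ : M.IsBasis J X) :
    (M.contract' X).Indep I ↔ I ⊆ M.E \ X ∧ M.Indep (I ∪ J) := by
  constructor
  · intro hI
    obtain ⟨B', hB', hIB'⟩ := hI.exists_isBase_superset
    rw [contract_eq', dual_isBase_iff'] at hB'
    obtain ⟨hB'base, hB'E⟩ := hB'
    simp only [restrict_ground_eq] at hB'base hB'E
    rw [isBase_restrict_iff', isBasis'_iff_isBasis (show M.E \ X ⊆ M✶.E from diff_subset)] at hB'base
    obtain ⟨Bs, hBs, hBseq⟩ := hB'base.exists_isBase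
    have hBsE : Bs ⊆ M.E := hBs.subset_ground
    set B := M.E \ Bs with hBdef
    have hB : M.IsBase B := hBs.compl_isBase_of_dual
    have hBXbasis : M.IsBasis (B ∩ X) X := by
      rw [hB.inter_isBasis_iff_compl_inter_isBasis_dual hX]
      rw [hBdef, diff_diff_cancel_left hBsE, ← hBseq]
      exact hB'base
    have hIE : I ⊆ M.E \ X := hIB'.trans hB'E
    have hIB : I ⊆ B := by
      intro e heI
      have heEX : e ∈ M.E \ X := hIE heI
      have : e ∉ Bs := by
        intro heBs
        have : e ∈ (M.E \ X) \ B' := by rw [hBseq]; exact ⟨heBs, heEX⟩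
        exact this.2 (hIB' heI)
      exact ⟨heEX.1, this⟩
    -- now prove M.Indep (I ∪ J) via the exchange argument
    set J' := B ∩ X with hJ'def
    have hIJ' : M.Indep (I ∪ J') :=
      hB.indep.subset (union_subset hIB inter_subset_left)
    have hbasisIX : M.IsBasis (I ∪ J') (I ∪ X) := by
      refine hIJ'.isBasis_of_subset_of_subset_closure
        (union_subset_union_right I inter_subset_right) ?_
      refine union_subset ?_ ?_
      · exact (subset_union_left).trans (M.subset_closure _ hIJ'.subset_ground)
      · exact hBXbasis.subset_closure.trans
          (M.closure_subset_closure subset_union_right)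
    obtain ⟨K, hK, hJK, hKsub⟩ := hJ.indep.exists_isBasis_subset_union_isBasis
      (hJ.subset.trans subset_union_right) hbasisIX
    have hKX : K ∩ X = J :=
      (hJ.eq_of_subset_indep (hK.indep.inter_right X)
        (subset_inter hJK hJ.subset) inter_subset_right).symm
    have hKIJ : K ⊆ I ∪ J := by
      intro e heK
      by_cases heX : e ∈ X
      · exact Or.inr (hKX ▸ ⟨heK, heX⟩)
      · rcases hKsub heK with h' | h'
        · exact Or.inr h'
        · rcases h' with h'' | h''
          · exact Or.inl h''
          · exact absurd (inter_subset_right h'') heX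
    have hdisj : Disjoint I J' := by
      refine disjoint_left.2 fun e heI heJ' => ?_
      exact (hIE heI).2 (inter_subset_right heJ')
    have hcard : (I ∪ J).encard ≤ K.encard := by
      calc (I ∪ J).encard ≤ I.encard + J.encard := encard_union_le I J
        _ = I.encard + J'.encard := by rw [hBXbasis.encard_eq_encard hJ]
        _ = (I ∪ J').encard := (encard_union_eq hdisj).symm
        _ = K.encard := (hK.encard_eq_encard hbasisIX).symm
    have hIJE : I ∪ J ⊆ M.E :=
      union_subset (hIE.trans diff_subset) hJ.indep.subset_ground
    have hfin : (I ∪ J).Finite := M.set_finite (I ∪ J) hIJE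
    have hKeq : K = I ∪ J := hfin.eq_of_subset_of_encard_le' hKIJ hcard
    exact ⟨hIE, hKeq ▸ hK.indep⟩
  · rintro ⟨hIE, hIJ⟩
    obtain ⟨B, hB, hIJB⟩ := hIJ.exists_isBase_superset
    have hJB : J = B ∩ X :=
      hJ.eq_of_subset_indep (hB.indep.inter_right X)
        (subset_inter ((subset_union_right).trans hIJB) hJ.subset) inter_subset_right
    have hBX : M.IsBasis (B ∩ X) X := hJB ▸ hJ
    have hdualbasis := hB.compl_inter_isBasis_of_inter_isBasis hBX
    rw [contract_eq', dual_indep_iff_exists']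
    refine ⟨hIE, (M.E \ B) ∩ (M.E \ X), ?_, ?_⟩
    · rw [isBase_restrict_iff']
      exact hdualbasis.isBasis'
    · exact disjoint_left.2 fun e heI heB =>
        heB.1.2 (hIJB (Or.inl heI))

lemma contract_dep_iff' [M.Finite] (hX : X ⊆ M.E) (hJ : M.IsBasis J X) (hS : S ⊆ M.E \ X) :
    (M.contract' X).Dep S ↔ M.Dep (S ∪ J) := by
  rw [dep_iff, dep_iff, contract_ground']
  constructor
  · rintro ⟨h1, -⟩
    refine ⟨fun hind => h1 ((contract_indep_iff' hX hJ).2 ⟨hS, hind⟩), ?_⟩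
    exact union_subset (hS.trans diff_subset) hJ.indep.subset_ground
  · rintro ⟨h1, -⟩
    refine ⟨fun hind => h1 ((contract_indep_iff' hX hJ).1 hind).2, hS⟩

lemma exists_circuit_subset' (M : Matroid α) [M.Finite] (hS : M.Dep S) :
    ∃ C ⊆ S, M.Circuit C := by
  have key : ∀ n (S : Set α), M.Dep S → S.ncard ≤ n → ∃ C ⊆ S, M.Circuit C := by
    intro n
    induction n with
    | zero =>
      intro S hS h0
      have hfin : S.Finite := M.set_finite S hS.subset_ground
      have : S = ∅ := by
        rw [← Set.ncard_eq_zero hfin]; omega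
      exact absurd (this ▸ M.empty_indep) hS.not_indep
    | succ n ih =>
      intro S hS hle
      by_cases hmin : Minimal M.Dep S
      · exact ⟨S, Subset.rfl, hmin⟩
      · obtain ⟨T, hT, hTS, hST⟩ : ∃ T, M.Dep T ∧ T ⊆ S ∧ ¬ S ⊆ T := by
          by_contra h'
          push_neg at h'
          exact hmin ⟨hS, fun y hy hyS => h' y hy hyS⟩
        have hfin : S.Finite := M.set_finite S hS.subset_ground
        have hlt : T.ncard < S.ncard := Set.ncard_lt_ncard ⟨hTS, hST⟩ hfin
        obtain ⟨C, hCT, hC⟩ := ih T hT (by omega)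
        exact ⟨C, hCT.trans hTS, hC⟩
  exact key S.ncard S hS le_rfl

lemma contract_circuit' [M.Finite] (hX : X ⊆ M.E) (hJ : M.IsBasis J X)
    (hD : (M.contract' X).Circuit D) : ∃ C, M.Circuit C ∧ C \ X = D ∧ C ⊆ D ∪ X := by
  have hDE : D ⊆ M.E \ X := by
    have := hD.prop.subset_ground
    rwa [contract_ground'] at this
  have hdep : M.Dep (D ∪ J) := (contract_dep_iff' hX hJ hDE).1 hD.prop
  obtain ⟨C, hCsub, hC⟩ := M.exists_circuit_subset' hdep
  have hCX : C \ X ⊆ D := by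
    rintro e ⟨heC, heX⟩
    rcases hCsub heC with h' | h'
    · exact h'
    · exact absurd (hJ.subset h') heX
  have hCsplit : C ⊆ (C \ X) ∪ J := by
    intro e heC
    by_cases heX : e ∈ X
    · rcases hCsub heC with h' | h'
      · exact absurd heX (hDE h').2
      · exact Or.inr h'
    · exact Or.inl ⟨heC, heX⟩
  have hCXdep : (M.contract' X).Dep (C \ X) := by
    rw [dep_iff, contract_ground']
    refine ⟨fun hind => ?_, diff_subset_diff_left hC.prop.subset_ground⟩
    obtain ⟨-, hind2⟩ := (contract_indep_iff' hX hJ).1 hind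
    exact hC.prop.not_indep (hind2.subset hCsplit)
  have hDC : D ⊆ C \ X := hD.2 hCXdep hCX
  exact ⟨C, hC, hCX.antisymm hDC,
    hCsub.trans (union_subset_union_right D hJ.subset)⟩

lemma subset_contract_closure' [M.Finite] (hX : X ⊆ M.E) (hJ : M.IsBasis J X)
    (hD : D ⊆ M.E \ X) (hCD : C ⊆ D ∪ X) (hA : A ⊆ M.closure C)
    (hAX : A ⊆ M.E \ X) : A ⊆ (M.contract' X).closure D := by
  obtain ⟨I, hI⟩ := (M.contract' X).exists_isBasis D (by rw [contract_ground']; exact hD)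
  obtain ⟨hIE, hIJ⟩ := (contract_indep_iff' hX hJ).1 hI.indep
  have hDcl : D ⊆ M.closure (I ∪ J) := by
    intro d hd
    by_cases hdI : d ∈ I
    · exact M.subset_closure _ hIJ.subset_ground (Or.inl hdI)
    · have hdep : (M.contract' X).Dep (insert d I) := hI.insert_dep ⟨hd, hdI⟩
      have hdep' : M.Dep (insert d (I ∪ J)) := by
        rw [dep_iff]
        refine ⟨fun hind => hdep.not_indep ((contract_indep_iff' hX hJ).2
          ⟨insert_subset (hD hd) hIE, by rwa [insert_union]⟩), ?_⟩
        exact insert_subset ((hD hd).1) hIJ.subset_ground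
      exact ((hIJ.insert_dep_iff).1 hdep').1
  have hCcl : C ⊆ M.closure (I ∪ J) :=
    hCD.trans (union_subset hDcl (hJ.subset_closure.trans
      (M.closure_subset_closure subset_union_right)))
  have hAcl : A ⊆ M.closure (I ∪ J) :=
    hA.trans (M.closure_subset_closure_of_subset_closure hCcl)
  intro e he
  by_cases heI : e ∈ I
  · exact (M.contract' X).closure_subset_closure hI.subset
      ((M.contract' X).subset_closure I hI.indep.subset_ground heI)
  · have heJ : e ∉ I ∪ J := by
      rintro (h' | h')
      · exact heI h'
      · exact (hAX he).2 (hJ.subset h')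
    have hdep : M.Dep (insert e (I ∪ J)) := hIJ.insert_dep_iff.2 ⟨hAcl he, heJ⟩
    have hdep' : (M.contract' X).Dep (insert e I) := by
      rw [dep_iff, contract_ground']
      refine ⟨fun hind => ?_, insert_subset (hAX he) hIE⟩
      obtain ⟨-, hind2⟩ := (contract_indep_iff' hX hJ).1 hind
      rw [insert_union] at hind2
      exact hdep.not_indep hind2
    have := hI.indep.insert_dep_iff.1 hdep'
    exact (M.contract' X).closure_subset_closure hI.subset this.1

end Matroid

/-- the class of `k`-laminar matroids is closed under deletion and
contraction, i.e. minor-closed. -/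
theorem kLaminar_minorClosed {α : Type*} (M : Matroid α) [M.Finite] (k : ℕ)
    (h : M.KLaminar k) (X : Set α) :
    (M.delete' X).KLaminar k ∧ (M.contract' X).KLaminar k := by
  constructor
  · intro C₁ C₂ h₁ h₂ hk
    obtain ⟨hc₁, hs₁⟩ := Matroid.delete_circuit' h₁
    obtain ⟨hc₂, hs₂⟩ := Matroid.delete_circuit' h₂
    rcases h C₁ C₂ hc₁ hc₂ hk with h' | h'
    · exact Or.inl (Matroid.subset_delete_closure' hs₂ hs₁ h')
    · exact Or.inr (Matroid.subset_delete_closure' hs₁ hs₂ h')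
  · have hXX : M.contract' X = M.contract' (X ∩ M.E) := by
      rw [Matroid.contract_eq', Matroid.contract_eq', Set.diff_inter_self_eq_diff]
    rw [hXX]
    set X' := X ∩ M.E with hX'def
    have hX' : X' ⊆ M.E := Set.inter_subset_right
    obtain ⟨J, hJ⟩ := M.exists_isBasis X' hX'
    intro D₁ D₂ h₁ h₂ hk
    obtain ⟨C₁, hC₁, hC₁X, hC₁sub⟩ := Matroid.contract_circuit' hX' hJ h₁
    obtain ⟨C₂, hC₂, hC₂X, hC₂sub⟩ := Matroid.contract_circuit' hX' hJ h₂
    have hD₁E : D₁ ⊆ M.E \ X' := by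
      have := h₁.prop.subset_ground; rwa [Matroid.contract_ground'] at this
    have hD₂E : D₂ ⊆ M.E \ X' := by
      have := h₂.prop.subset_ground; rwa [Matroid.contract_ground'] at this
    have hsub : D₁ ∩ D₂ ⊆ C₁ ∩ C₂ := by
      rw [← hC₁X, ← hC₂X]
      exact Set.inter_subset_inter Set.diff_subset Set.diff_subset
    have hk' : k ≤ (C₁ ∩ C₂).ncard :=
      hk.trans (Set.ncard_le_ncard hsub
        (M.set_finite _ ((Set.inter_subset_left).trans hC₁.prop.subset_ground)))
    rcases h C₁ C₂ hC₁ hC₂ hk' with h' | h'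
    · refine Or.inl (Matroid.subset_contract_closure' hX' hJ hD₂E hC₂sub ?_ hD₁E)
      exact (hC₁X ▸ Set.diff_subset).trans h'
    · refine Or.inr (Matroid.subset_contract_closure' hX' hJ hD₁E hC₁sub ?_ hD₂E)
      exact (hC₂X ▸ Set.diff_subset).trans h'
end

section
/- Let C be a circuit of a matroid M and x, y be non-loop elements of cl(C) − C. Suppose Cx, Cx', Cy, Cy' are circuits with Cx ∪ Cx' = C ∪ {x}, Cy ∪ Cy' = C ∪ {y}, Cx ∩ Cx' = {x}, Cy ∩ Cy' = {y}, and Cx △ {x,y} = Cy. Then x and y are parallel in M (i.e., {x,y} is a circuit). -/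
open Set

section Aux

open Matroid

variable {α : Type*} {M : Matroid α} {D : Set α} {e : α}

private lemma circuit_diff_indep (hD : M.Circuit D) (he : e ∈ D) : M.Indep (D \ {e}) := by
  by_contra hdep
  have hdep' : M.Dep (D \ {e}) := ⟨hdep, diff_subset.trans hD.prop.subset_ground⟩
  have heq : D \ {e} = D := hD.eq_of_subset hdep' diff_subset
  have hne : e ∉ D \ {e} := fun h => h.2 rfl
  rw [heq] at hne
  exact hne he

private lemma circuit_mem_closure (hD : M.Circuit D) (he : e ∈ D) :
    e ∈ M.closure (D \ {e}) := by
  have hind := circuit_diff_indep hD he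
  have hdep : M.Dep (insert e (D \ {e})) := by
    rw [insert_diff_singleton, insert_eq_of_mem he]
    exact hD.prop
  exact ((hind.insert_dep_iff).mp hdep).1

end Aux

/-- under the given configuration of circuits, `x` and `y` are parallel. -/
theorem parallel_of_circuit_config {α : Type*} (M : Matroid α) [M.Finite]
    {C : Set α} (hC : M.Circuit C) {x y : α}
    (hx : x ∈ M.closure C \ C) (hy : y ∈ M.closure C \ C)
    (hxl : x ∉ M.closure ∅) (hyl : y ∉ M.closure ∅)
    {Cx Cx' Cy Cy' : Set α}
    (hCx : M.Circuit Cx) (hCx' : M.Circuit Cx') (hCy : M.Circuit Cy) (hCy' : M.Circuit Cy')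
    (hux : Cx ∪ Cx' = C ∪ {x}) (huy : Cy ∪ Cy' = C ∪ {y})
    (hix : Cx ∩ Cx' = {x}) (hiy : Cy ∩ Cy' = {y})
    (hsymm : symmDiff Cx {x, y} = Cy) :
    M.Circuit {x, y} := by
  obtain ⟨hxcl, hxC⟩ := hx
  obtain ⟨hycl, hyC⟩ := hy
  have hCE : C ⊆ M.E := hC.prop.subset_ground
  have hxE : x ∈ M.E := M.closure_subset_ground C hxcl
  have hyE : y ∈ M.E := M.closure_subset_ground C hycl
  have hxCx : x ∈ Cx ∩ Cx' := by rw [hix]; exact rfl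
  have hyCy : y ∈ Cy ∩ Cy' := by rw [hiy]; exact rfl
  -- x ≠ y
  have hxy : x ≠ y := by
    rintro rfl
    have hCyeq : Cy = Cx \ {x} := by
      rw [← hsymm]; ext e
      simp only [symmDiff_def, Set.sup_eq_union, mem_union, mem_diff, mem_insert_iff,
        mem_singleton_iff, or_self]
      constructor
      · rintro (⟨he, hne⟩ | ⟨rfl, hne⟩)
        · exact ⟨he, hne⟩
        · exact absurd hxCx.1 hne
      · rintro ⟨he, hne⟩; exact Or.inl ⟨he, hne⟩
    have heq : Cy = Cx := hCx.eq_of_subset hCy.prop (hCyeq ▸ diff_subset)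
    rw [heq] at hCyeq
    exact (hCyeq ▸ hxCx.1 : x ∈ Cx \ {x}).2 rfl
  set A := Cx \ {x} with hA_def
  set B := Cx' \ {x} with hB_def
  have hCxsub : Cx ⊆ C ∪ {x} := hux ▸ subset_union_left
  have hCy'sub : Cy' ⊆ C ∪ {y} := huy ▸ subset_union_right
  have hyCx : y ∉ Cx := fun h => by
    rcases hCxsub h with h | h
    · exact hyC h
    · exact hxy (mem_singleton_iff.mp h).symm
  -- Cy = insert y A
  have hCyeq : Cy = insert y A := by
    rw [← hsymm]; ext e
    simp only [symmDiff_def, Set.sup_eq_union, mem_union, mem_diff, mem_insert_iff,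
      mem_singleton_iff, hA_def]
    constructor
    · rintro (⟨he, hne⟩ | ⟨(rfl | rfl), hne⟩)
      · exact Or.inr ⟨he, fun h => hne (Or.inl h)⟩
      · exact absurd hxCx.1 hne
      · exact Or.inl rfl
    · rintro (rfl | ⟨he, hne⟩)
      · exact Or.inr ⟨Or.inr rfl, hyCx⟩
      · exact Or.inl ⟨he, fun h => h.elim hne (fun h' => hyCx (h' ▸ he))⟩
  have hAB : A ∪ B = C := by
    rw [hA_def, hB_def, ← union_diff_distrib, hux, union_diff_distrib,
      diff_singleton_eq_self hxC, diff_self, union_empty]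
  have hdisj : ∀ e, e ∈ A → e ∈ B → False := by
    intro e heA heB
    have : e ∈ Cx ∩ Cx' := ⟨heA.1, heB.1⟩
    rw [hix] at this
    exact heA.2 this
  have hAsubC : A ⊆ C := hAB ▸ subset_union_left
  have hBsubC : B ⊆ C := hAB ▸ subset_union_right
  have hxA : x ∉ A := fun h => h.2 rfl
  have hxB : x ∉ B := fun h => h.2 rfl
  have hyA : y ∉ A := fun h => hyC (hAsubC h)
  have hyB : y ∉ B := fun h => hyC (hBsubC h)
  have hCxeq : Cx = insert x A := by
    rw [hA_def, insert_diff_singleton, insert_eq_of_mem hxCx.1]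
  have hCx'eq : Cx' = insert x B := by
    rw [hB_def, insert_diff_singleton, insert_eq_of_mem hxCx.2]
  -- Cy' = insert y B
  have hCy'eq : Cy' = insert y B := by
    ext e
    constructor
    · intro he
      rcases eq_or_ne e y with rfl | hne
      · exact mem_insert _ _
      have heC : e ∈ C := by
        rcases hCy'sub he with h | h
        · exact h
        · exact absurd (mem_singleton_iff.mp h) hne
      rcases (hAB ▸ heC : e ∈ A ∪ B) with h | h
      · exfalso
        have : e ∈ Cy ∩ Cy' := ⟨hCyeq ▸ Or.inr h, he⟩
        rw [hiy] at this
        exact hne this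
      · exact Or.inr h
    · rintro (rfl | he)
      · exact hyCy.2
      · have heC : e ∈ Cy ∪ Cy' := huy ▸ Or.inl (hBsubC he)
        rcases heC with h | h
        · exfalso
          rw [hCyeq] at h
          rcases h with rfl | h
          · exact hyB he
          · exact hdisj e h he
        · exact h
  -- independence and closure facts
  have hAind : M.Indep A := circuit_diff_indep hCx hxCx.1
  have hBind : M.Indep B := circuit_diff_indep hCx' hxCx.2
  have hyclA : y ∈ M.closure A := by
    have := circuit_mem_closure hCy (hCyeq ▸ mem_insert y A)
    rwa [hCyeq, insert_diff_self_of_notMem hyA] at this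
  have hyclB : y ∈ M.closure B := by
    have := circuit_mem_closure hCy' (hCy'eq ▸ mem_insert y B)
    rwa [hCy'eq, insert_diff_self_of_notMem hyB] at this
  -- A and B are nonempty
  have hAne : A.Nonempty := by
    rw [nonempty_iff_ne_empty]
    intro h
    exact hxl (h ▸ circuit_mem_closure hCx hxCx.1)
  have hBne : B.Nonempty := by
    rw [nonempty_iff_ne_empty]
    intro h
    exact hxl (h ▸ circuit_mem_closure hCx' hxCx.2)
  obtain ⟨b, hbB⟩ := hBne
  have hbC : b ∈ C := hBsubC hbB
  have hbCx' : b ∈ Cx' := hbB.1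
  have hxb : x ≠ b := fun h => hxC (h ▸ hbC)
  have hxnotclBb : x ∉ M.closure (B \ {b}) := by
    have hind := circuit_diff_indep hCx' hbCx'
    have hxmem : x ∈ Cx' \ {b} := ⟨hxCx.2, hxb⟩
    have := hind.notMem_closure_diff_of_mem hxmem
    rwa [diff_diff_comm] at this
  have hCb_ind : M.Indep (C \ {b}) := circuit_diff_indep hC hbC
  -- find a ∈ A with x ∉ cl((C \ {b}) \ {a})
  have hexa : ∃ a ∈ A, x ∉ M.closure ((C \ {b}) \ {a}) := by
    by_contra h
    push_neg at h
    have hUsub : M.Indep (⋃ a ∈ A, (C \ {b}) \ {a}) := by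
      refine hCb_ind.subset ?_
      refine iUnion₂_subset fun a _ => diff_subset
    have hinter := Matroid.closure_biInter_eq_biInter_closure_of_biUnion_indep (M := M) hAne hUsub
    have hx' : x ∈ ⋂ a ∈ A, M.closure ((C \ {b}) \ {a}) := mem_iInter₂.mpr h
    rw [← hinter] at hx'
    have hIeq : (⋂ a ∈ A, (C \ {b}) \ {a}) = B \ {b} := by
      ext e
      simp only [mem_iInter, mem_diff, mem_singleton_iff]
      constructor
      · intro he
        obtain ⟨a0, ha0⟩ := hAne
        obtain ⟨⟨heC, heb⟩, -⟩ := he a0 ha0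
        have heA : e ∉ A := fun heA => (he e heA).2 rfl
        rcases (hAB ▸ heC : e ∈ A ∪ B) with h' | h'
        · exact absurd h' heA
        · exact ⟨h', heb⟩
      · rintro ⟨heB, heb⟩ a haA
        exact ⟨⟨hBsubC heB, heb⟩, fun h' => hdisj e (h' ▸ haA) heB⟩
    rw [hIeq] at hx'
    exact hxnotclBb hx'
  obtain ⟨a, haA, hxa_cl⟩ := hexa
  have haC : a ∈ C := hAsubC haA
  have haCx : a ∈ Cx := haA.1
  have hxa : x ≠ a := fun h => hxC (h ▸ haC)
  set D := (C \ {b}) \ {a} with hD_def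
  have hDind : M.Indep D := hCb_ind.subset diff_subset
  have hxD : x ∉ D := fun h => hxC h.1.1
  have hIind : M.Indep (insert x D) := by
    rw [hDind.insert_indep_iff_of_notMem hxD]
    exact ⟨hxE, hxa_cl⟩
  set I₁ := insert x (A \ {a}) with hI₁_def
  set I₂ := insert x (B \ {b}) with hI₂_def
  have hI12u : I₁ ∪ I₂ = insert x D := by
    ext e
    simp only [hI₁_def, hI₂_def, hD_def, mem_union, mem_insert_iff, mem_diff,
      mem_singleton_iff]
    constructor
    · rintro ((rfl | ⟨heA, hea⟩) | (rfl | ⟨heB, heb⟩))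
      · exact Or.inl rfl
      · exact Or.inr ⟨⟨hAsubC heA, fun h => hdisj e heA (h ▸ hbB)⟩, hea⟩
      · exact Or.inl rfl
      · exact Or.inr ⟨⟨hBsubC heB, heb⟩, fun h => hdisj e (h ▸ haA) heB⟩
    · rintro (rfl | ⟨⟨heC, heb⟩, hea⟩)
      · exact Or.inl (Or.inl rfl)
      · rcases (hAB ▸ heC : e ∈ A ∪ B) with h | h
        · exact Or.inl (Or.inr ⟨h, hea⟩)
        · exact Or.inr (Or.inr ⟨h, heb⟩)
  have hI12i : I₁ ∩ I₂ = {x} := by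
    ext e
    simp only [hI₁_def, hI₂_def, mem_inter_iff, mem_insert_iff, mem_diff,
      mem_singleton_iff]
    constructor
    · rintro ⟨(rfl | ⟨heA, -⟩), h2⟩
      · rfl
      · rcases h2 with rfl | ⟨heB, -⟩
        · exact absurd heA hxA
        · exact absurd (hdisj e heA heB) not_false
    · rintro rfl
      exact ⟨Or.inl rfl, Or.inl rfl⟩
  have hUind : M.Indep (I₁ ∪ I₂) := hI12u ▸ hIind
  have hclx : M.closure {x} = M.closure I₁ ∩ M.closure I₂ := by
    rw [← hI12i]
    exact hUind.closure_inter_eq_inter_closure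
  -- y ∈ cl I₁
  have hyI₁ : y ∈ M.closure I₁ := by
    have ha_cl : a ∈ M.closure I₁ := by
      have := circuit_mem_closure hCx haCx
      rwa [hCxeq, insert_diff_of_notMem _ (fun h => hxa (mem_singleton_iff.mp h))] at this
    have hsub : A ⊆ insert a I₁ := by
      intro e he
      rcases eq_or_ne e a with rfl | hne
      · exact mem_insert _ _
      · exact Or.inr (Or.inr ⟨he, hne⟩)
    have : M.closure A ⊆ M.closure I₁ := by
      rw [← Matroid.closure_insert_eq_of_mem_closure ha_cl]
      exact M.closure_subset_closure hsub
    exact this hyclA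
  have hyI₂ : y ∈ M.closure I₂ := by
    have hb_cl : b ∈ M.closure I₂ := by
      have := circuit_mem_closure hCx' hbCx'
      rwa [hCx'eq, insert_diff_of_notMem _ (fun h => hxb (mem_singleton_iff.mp h))] at this
    have hsub : B ⊆ insert b I₂ := by
      intro e he
      rcases eq_or_ne e b with rfl | hne
      · exact mem_insert _ _
      · exact Or.inr (Or.inr ⟨he, hne⟩)
    have : M.closure B ⊆ M.closure I₂ := by
      rw [← Matroid.closure_insert_eq_of_mem_closure hb_cl]
      exact M.closure_subset_closure hsub
    exact this hyclB
  have hyclx : y ∈ M.closure {x} := hclx ▸ ⟨hyI₁, hyI₂⟩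
  -- singletons independent
  have hxind : M.Indep {x} := by
    have := M.empty_indep.insert_indep_iff_of_notMem (notMem_empty x)
    rw [insert_empty_eq] at this
    exact this.mpr ⟨hxE, hxl⟩
  have hyind : M.Indep {y} := by
    have := M.empty_indep.insert_indep_iff_of_notMem (notMem_empty y)
    rw [insert_empty_eq] at this
    exact this.mpr ⟨hyE, hyl⟩
  have hdep : M.Dep {x, y} := by
    rw [pair_comm]
    exact hxind.insert_dep_iff.mpr
      ⟨hyclx, fun h => hxy (mem_singleton_iff.mp h).symm⟩
  refine ⟨hdep, fun D' hD' hsub => ?_⟩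
  have hxD' : x ∈ D' := by
    by_contra hxD'
    refine hD'.not_indep (hyind.subset fun e he => ?_)
    rcases hsub he with rfl | h
    · exact absurd he hxD'
    · exact h
  have hyD' : y ∈ D' := by
    by_contra hyD'
    refine hD'.not_indep (hxind.subset fun e he => ?_)
    rcases hsub he with h | rfl
    · exact h
    · exact absurd he hyD'
  rintro e (rfl | rfl)
  · exact hxD'
  · exact hyD'
end

section
/- Let C and D be distinct circuits of a matroid M with |D − C| = 1, and let D' be a circuit contained in C ∪ D with D' ≠ C and D' ≠ D. Then D' ⊇ C − D. -/
open Set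

section Aux

open Set Matroid

variable {α : Type*} {M : Matroid α}

/-- Proper subsets of a circuit are independent. -/
private lemma circuit_diff_indep_s13 {C : Set α} (hC : M.Circuit C) {S : Set α}
    (hS : S ⊆ C) (hne : ¬ C ⊆ S) : M.Indep S := by
  by_contra h
  exact hne (hC.2 (M.dep_of_not_indep h (hS.trans hC.1.subset_ground)) hS)

/-- Every finite dependent set contains a circuit. -/
private lemma dep_contains_circuit {S : Set α} (hfin : S.Finite) (hS : M.Dep S) :
    ∃ C ⊆ S, M.Circuit C := by
  obtain ⟨C, hCmem, hCmin⟩ := Set.Finite.exists_minimal (s := {T | T ⊆ S ∧ M.Dep T})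
    (Set.Finite.finite_subsets hfin |>.subset (fun T hT => hT.1)) ⟨S, subset_rfl, hS⟩
  refine ⟨C, hCmem.1, hCmem.2, fun T hT hTC => ?_⟩
  exact (hCmin ⟨hTC.trans hCmem.1, hT⟩ hTC)

/-- Circuit elimination. -/
private lemma circuit_elimination [M.Finite] {C₁ C₂ : Set α} (hC₁ : M.Circuit C₁)
    (hC₂ : M.Circuit C₂) (hne : C₁ ≠ C₂) {e : α} (he₁ : e ∈ C₁) (he₂ : e ∈ C₂) :
    ∃ C₀, M.Circuit C₀ ∧ C₀ ⊆ (C₁ ∪ C₂) \ {e} := by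
  set X := C₁ ∪ C₂ with hX
  have hC₁E : C₁ ⊆ M.E := hC₁.1.subset_ground
  have hC₂E : C₂ ⊆ M.E := hC₂.1.subset_ground
  have hXE : X ⊆ M.E := union_subset hC₁E hC₂E
  have hXfin : X.Finite := M.set_finite X hXE
  -- find f ∈ C₁ \ C₂
  have hnsub : ¬ C₁ ⊆ C₂ := fun h => hne (h.antisymm (hC₂.2 hC₁.1 h))
  obtain ⟨f, hfC₁, hfC₂⟩ := not_subset.mp hnsub
  have hfe : e ≠ f := fun h => hfC₂ (h ▸ he₂)
  -- I = C₁ \ {f} is independent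
  have hI : M.Indep (C₁ \ {f}) :=
    circuit_diff_indep_s13 hC₁ diff_subset (fun h => (h hfC₁).2 rfl)
  obtain ⟨J, hJ, hIJ⟩ := hI.subset_isBasis_of_subset (diff_subset.trans subset_union_left) hXE
  have hfJ : f ∉ J := by
    intro hfJ
    have : C₁ ⊆ J := by
      intro x hx
      rcases eq_or_ne x f with rfl | hxf
      · exact hfJ
      · exact hIJ ⟨hx, hxf⟩
    exact hC₁.1.not_indep (hJ.indep.subset this)
  obtain ⟨g, hgC₂, hgJ⟩ := not_subset.mp (fun h => hC₂.1.not_indep (hJ.indep.subset h))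
  have hgf : g ≠ f := fun h => hfC₂ (h ▸ hgC₂)
  have heJ : e ∈ J := hIJ ⟨he₁, fun h => hfe (mem_singleton_iff.mp h)⟩
  -- suppose X \ {e} were independent
  suffices hdep : M.Dep (X \ {e}) by
    obtain ⟨C₀, hC₀X, hC₀⟩ := dep_contains_circuit (hXfin.subset diff_subset) hdep
    exact ⟨C₀, hC₀, hC₀X⟩
  rw [dep_iff, and_iff_left (diff_subset.trans hXE)]
  intro hind
  -- cardinality comparison
  have hJsub : J ⊆ (X \ {f}) \ {g} := by
    intro x hx
    exact ⟨⟨hJ.subset hx, fun h => hfJ (mem_singleton_iff.mp h ▸ hx)⟩,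
      fun h => hgJ (mem_singleton_iff.mp h ▸ hx)⟩
  have hfX : f ∈ X := Or.inl hfC₁
  have hgX : g ∈ X \ {f} := ⟨Or.inr hgC₂, hgf⟩
  have heX : e ∈ X := Or.inl he₁
  have h1 : ((X \ {f}) \ {g}).encard + 1 = (X \ {f}).encard :=
    encard_diff_singleton_add_one hgX
  have h2 : (X \ {f}).encard + 1 = X.encard := encard_diff_singleton_add_one hfX
  have h3 : (X \ {e}).encard + 1 = X.encard := encard_diff_singleton_add_one heX
  have h4 : (X \ {f}).encard = (X \ {e}).encard :=
    ENat.add_left_injective_of_ne_top ENat.one_ne_top (h2.trans h3.symm)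
  have hlt : J.encard < (X \ {e}).encard := by
    rw [← ENat.add_one_le_iff (hXfin.subset hJ.subset).encard_lt_top.ne, ← h4, ← h1]
    exact add_le_add_left (encard_mono hJsub) 1
  obtain ⟨x, hx, hxi⟩ := hJ.indep.augment hind hlt
  have hxX : insert x J ⊆ X := insert_subset (hx.1.1) hJ.subset
  have := hJ.eq_of_subset_indep hxi (subset_insert x J) hxX
  exact hx.2 (this ▸ mem_insert x J)

end Aux

/-- if `C`, `D` are distinct circuits with `|D - C| = 1` and `D'` is a
circuit contained in `C ∪ D` other than `C` and `D`, then `D' ⊇ C - D`. -/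
theorem circuit_superset_diff {α : Type*} (M : Matroid α) [M.Finite]
    {C D D' : Set α} (hC : M.Circuit C) (hD : M.Circuit D) (hne : C ≠ D)
    (hcard : (D \ C).ncard = 1) (hD' : M.Circuit D') (hsub : D' ⊆ C ∪ D)
    (h1 : D' ≠ C) (h2 : D' ≠ D) : C \ D ⊆ D' := by
  obtain ⟨e, he⟩ := Set.ncard_eq_one.mp hcard
  have heD : e ∈ D := (he ▸ (Set.mem_singleton e)).1
  have heC : e ∉ C := (he ▸ (Set.mem_singleton e)).2
  have hDsub : D ⊆ C ∪ {e} := by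
    intro x hx
    by_cases hxC : x ∈ C
    · exact Or.inl hxC
    · exact Or.inr (he ▸ ⟨hx, hxC⟩)
  -- e ∈ D'
  have heD' : e ∈ D' := by
    by_contra h
    have hD'C : D' ⊆ C := by
      intro x hx
      rcases hsub hx with h1 | h2
      · exact h1
      · rcases hDsub h2 with h3 | h4
        · exact h3
        · exact absurd (h4 ▸ hx) h
    exact h1 (hD'C.antisymm (hC.2 hD'.1 hD'C))
  intro f hf
  by_contra hfD'
  obtain ⟨C₀, hC₀, hC₀sub⟩ := circuit_elimination hD' hD h2 heD' heD
  have hC₀C : C₀ ⊆ C := by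
    intro x hx
    have hx' := hC₀sub hx
    rcases hx'.1 with h1 | h2
    · rcases hsub h1 with ha | hb
      · exact ha
      · rcases hDsub hb with hc | hd
        · exact hc
        · exact absurd hd hx'.2
    · rcases hDsub h2 with hc | hd
      · exact hc
      · exact absurd hd hx'.2
  have : C ⊆ C₀ := hC.2 hC₀.1 hC₀C
  have hfC₀ : f ∈ C₀ := this hf.1
  rcases hC₀sub hfC₀ with ⟨h1' | h2', _⟩
  · exact hfD' h1'
  · exact hf.2 h2'
end

section
/- If a matroid M has rank at most k+1, then M is k-laminar and k-closure-laminar. -/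
open Set

namespace Matroid

variable {α : Type*}

section Aux

variable {M : Matroid α} {k : ℕ}

/-- Every independent set has at most `M.rk M.E` elements. -/
lemma indep_ncard_le_of_rk_le [M.Finite] (h : M.rk M.E ≤ k + 1) {I : Set α}
    (hI : M.Indep I) : I.ncard ≤ k + 1 := by
  refine le_trans ?_ h
  have hbd : BddAbove {n | ∃ I, I ⊆ M.E ∧ M.Indep I ∧ I.ncard = n} := by
    refine ⟨M.E.ncard, ?_⟩
    rintro n ⟨J, hJE, -, rfl⟩
    exact ncard_le_ncard hJE M.ground_finite
  exact le_csSup hbd ⟨I, hI.subset_ground, hI, rfl⟩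

/-- An independent set of size `k + 1` is spanning. -/
lemma spanning_of_indep_card [M.Finite] (h : M.rk M.E ≤ k + 1) {J : Set α}
    (hJ : M.Indep J) (hcard : k + 1 ≤ J.ncard) : M.E ⊆ M.closure J := by
  intro e he
  by_contra hecl
  have heJ : e ∉ J := fun h' ↦ hecl (M.subset_closure J hJ.subset_ground h')
  have hins : M.Indep (insert e J) := by
    rw [hJ.insert_indep_iff]
    exact Or.inl ⟨he, hecl⟩
  have := indep_ncard_le_of_rk_le h hins
  rw [ncard_insert_of_notMem heJ (M.set_finite J hJ.subset_ground)] at this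
  omega

lemma Circuit.subset_ground' (hC : M.Circuit C) : C ⊆ M.E := hC.1.subset_ground

lemma Circuit.indep_of_ssubset (hC : M.Circuit C) {I : Set α} (hI : I ⊂ C) :
    M.Indep I := by
  by_contra hdep
  have : M.Dep I := ⟨hdep, hI.subset.trans hC.subset_ground'⟩
  exact hI.not_subset (hC.2 this hI.subset)

lemma Circuit.diff_singleton_indep (hC : M.Circuit C) {x : α} (hx : x ∈ C) :
    M.Indep (C \ {x}) :=
  hC.indep_of_ssubset (sdiff_singleton_ssubset.mpr hx)

lemma Circuit.mem_closure_diff_singleton (hC : M.Circuit C) {x : α} (hx : x ∈ C) :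
    x ∈ M.closure (C \ {x}) := by
  have hI := hC.diff_singleton_indep hx
  by_contra hcl
  have : M.Indep (insert x (C \ {x})) := by
    rw [hI.insert_indep_iff]
    exact Or.inl ⟨hC.subset_ground' hx, hcl⟩
  rw [insert_diff_singleton, insert_eq_of_mem hx] at this
  exact hC.1.not_indep this

lemma Circuit.closure_diff_singleton (hC : M.Circuit C) {x : α} (hx : x ∈ C) :
    M.closure (C \ {x}) = M.closure C := by
  refine (M.closure_subset_closure diff_subset).antisymm ?_
  refine M.closure_subset_closure_of_subset_closure fun y hy ↦ ?_
  rcases eq_or_ne y x with rfl | hne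
  · exact hC.mem_closure_diff_singleton hx
  · exact M.subset_closure _ ((hC.diff_singleton_indep hx).subset_ground) ⟨hy, hne⟩

lemma Circuit.finite' [M.Finite] (hC : M.Circuit C) : C.Finite :=
  M.set_finite C hC.subset_ground'

lemma Circuit.ncard_le [M.Finite] (h : M.rk M.E ≤ k + 1) (hC : M.Circuit C) :
    C.ncard ≤ k + 2 := by
  obtain ⟨x, hx⟩ := hC.1.nonempty
  have h1 := indep_ncard_le_of_rk_le h (hC.diff_singleton_indep hx)
  have h2 : (C \ {x}).ncard + 1 = C.ncard := ncard_diff_singleton_add_one hx hC.finite'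
  omega

/-- A circuit of `k + 2` elements spans the ground set. -/
lemma Circuit.ground_subset_closure [M.Finite] (h : M.rk M.E ≤ k + 1) (hC : M.Circuit C)
    (hcard : C.ncard = k + 2) : M.E ⊆ M.closure C := by
  obtain ⟨x, hx⟩ := hC.1.nonempty
  have hJ := hC.diff_singleton_indep hx
  have h2 : (C \ {x}).ncard + 1 = C.ncard := ncard_diff_singleton_add_one hx hC.finite'
  have := spanning_of_indep_card h hJ (by omega)
  exact this.trans (M.closure_subset_closure diff_subset)

/-- An independent set contained in the closure of an independent set `J` has
at most `J.ncard` elements. -/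
lemma indep_ncard_le_of_subset_closure [M.Finite] {I J : Set α} (hI : M.Indep I)
    (hJ : M.Indep J) (hIJ : I ⊆ M.closure J) : I.ncard ≤ J.ncard := by
  obtain ⟨I', hI', hII'⟩ := hI.subset_isBasis_of_subset hIJ (M.closure_subset_ground J)
  have hI'J : I'.encard = J.encard := hI'.encard_eq_encard hJ.isBasis_closure
  have h1 : I.ncard ≤ I'.ncard :=
    ncard_le_ncard hII' (M.set_finite I' hI'.indep.subset_ground)
  have h2 : I'.ncard = J.ncard := by
    rw [ncard_def, ncard_def, hI'J]
  omega

end Aux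

end Matroid

/-- a matroid of rank at most `k + 1` is `k`-laminar and
`k`-closure-laminar. -/
theorem laminar_of_rk_le {α : Type*} (M : Matroid α) [M.Finite] (k : ℕ)
    (h : M.rk M.E ≤ k + 1) : M.KLaminar k ∧ M.KClosureLaminar k := by
  constructor
  · -- k-laminar
    intro C₁ C₂ h1 h2 hk
    by_cases h12 : C₁ ⊆ C₂
    · exact Or.inl (h12.trans (M.subset_closure C₂ h2.subset_ground'))
    by_cases h21 : C₂ ⊆ C₁
    · exact Or.inr (h21.trans (M.subset_closure C₁ h1.subset_ground'))
    -- I = C₁ ∩ C₂ is a proper independent subset of both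
    set I := C₁ ∩ C₂ with hIdef
    have hI1 : I ⊂ C₁ := ⟨inter_subset_left, fun hs ↦ h12 fun x hx ↦ (hs hx).2⟩
    have hI2 : I ⊂ C₂ := ⟨inter_subset_right, fun hs ↦ h21 fun x hx ↦ (hs hx).1⟩
    have hIind : M.Indep I := h1.indep_of_ssubset hI1
    have hC₁fin := h1.finite'
    have hC₂fin := h2.finite'
    have hlt1 : I.ncard < C₁.ncard := ncard_lt_ncard hI1 hC₁fin
    have hlt2 : I.ncard < C₂.ncard := ncard_lt_ncard hI2 hC₂fin
    have hle1 : C₁.ncard ≤ k + 2 := h1.ncard_le h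
    have hle2 : C₂.ncard ≤ k + 2 := h2.ncard_le h
    by_cases hc1 : C₁.ncard = k + 2
    · exact Or.inr ((h2.subset_ground').trans (h1.ground_subset_closure h hc1))
    by_cases hc2 : C₂.ncard = k + 2
    · exact Or.inl ((h1.subset_ground').trans (h2.ground_subset_closure h hc2))
    -- both circuits have k + 1 elements and I has k elements
    have hIk : I.ncard = k := by omega
    have hC2k : C₂.ncard = k + 1 := by omega
    refine Or.inr fun e he ↦ ?_
    by_cases heI : e ∈ I
    · exact M.subset_closure C₁ h1.subset_ground' heI.1
    · -- then I = C₂ \ {e}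
      have hIe : I = C₂ \ {e} := by
        refine eq_of_subset_of_ncard_le (fun y hy ↦ ⟨hy.2, fun h' ↦ heI (h' ▸ hy)⟩) ?_
          (hC₂fin.diff)
        have : (C₂ \ {e}).ncard + 1 = C₂.ncard := ncard_diff_singleton_add_one he hC₂fin
        omega
      have : e ∈ M.closure I := hIe ▸ h2.mem_closure_diff_singleton he
      exact M.closure_subset_closure inter_subset_left this
  · -- k-closure-laminar
    intro X _hXE hXind hXk F₁ hF₁ F₂ hF₂ _hne
    obtain ⟨⟨hF₁flat, C₁, hC₁, hC₁F, hcl₁⟩, hXF₁⟩ := hF₁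
    obtain ⟨⟨hF₂flat, C₂, hC₂, hC₂F, hcl₂⟩, hXF₂⟩ := hF₂
    have hle1 : C₁.ncard ≤ k + 2 := hC₁.ncard_le h
    have hle2 : C₂.ncard ≤ k + 2 := hC₂.ncard_le h
    by_cases hc1 : C₁.ncard = k + 2
    · exact Or.inr fun e he ↦ hcl₁ ▸ hC₁.ground_subset_closure h hc1 (hF₂flat.subset_ground he)
    by_cases hc2 : C₂.ncard = k + 2
    · exact Or.inl fun e he ↦ hcl₂ ▸ hC₂.ground_subset_closure h hc2 (hF₁flat.subset_ground he)
    -- both circuits have at most k + 1 elements; show F₁ = closure X = F₂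
    have key : ∀ (C F : Set α), M.Circuit C → C ⊆ F → M.closure C = F → M.IsFlat F →
        X ⊆ F → C.ncard ≤ k + 1 → F = M.closure X := by
      intro C F hC hCF hclC hFflat hXF hCcard
      have hXsub : X ⊆ M.closure C := hclC ▸ hXF
      have hCsubX : C ⊆ M.closure X := by
        intro e he
        by_contra hecl
        have heX : e ∉ X := fun h' ↦ hecl (M.subset_closure X hXind.subset_ground h')
        have hins : M.Indep (insert e X) := by
          rw [hXind.insert_indep_iff]
          exact Or.inl ⟨hC.subset_ground' he, hecl⟩
        obtain ⟨x, hx⟩ := hC.1.nonempty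
        have hJ := hC.diff_singleton_indep hx
        have hJcard : (C \ {x}).ncard + 1 = C.ncard :=
          ncard_diff_singleton_add_one hx hC.finite'
        have hsub : insert e X ⊆ M.closure (C \ {x}) := by
          rw [hC.closure_diff_singleton hx]
          exact insert_subset (M.subset_closure C hC.subset_ground' he) hXsub
        have := Matroid.indep_ncard_le_of_subset_closure hins hJ hsub
        rw [ncard_insert_of_notMem heX (M.set_finite X hXind.subset_ground), hXk] at this
        omega
      refine le_antisymm ?_ ?_
      · rw [← hclC]
        exact M.closure_subset_closure_of_subset_closure hCsubX
      · rw [← hFflat.closure]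
        exact M.closure_subset_closure hXF
    rw [key C₁ F₁ hC₁ hC₁F hcl₁ hF₁flat hXF₁ (by omega),
      key C₂ F₂ hC₂ hC₂F hcl₂ hF₂flat hXF₂ (by omega)]
    exact Or.inl subset_rfl
end
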